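/- If the eigenvalues follow an exact power law σ_i = i^{-α} for i = 1,...,d with α > 0, then the Shannon entropy of the normalized spectrum (hence RankMe) is strictly decreasing in α; in particular for any α' > α ≥ 0, RankMe(α') < RankMe(α). -/
import Mathlib

/-- Strict Gibbs inequality for finite probability vectors. -/
lemma gibbs_strict {d : ℕ} (p q : Fin d → ℝ) (hp : ∀ i, 0 < p i) (hq : ∀ i, 0 < q i)
    (hsp : ∑ i, p i = 1) (hsq : ∑ i, q i = 1) (hne : ∃ i, p i ≠ q i) :
    ∑ i, q i * Real.log (p i) < ∑ i, q i * Real.log (q i) := by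
  have key : ∑ i, (q i * Real.log (p i) - q i * Real.log (q i)) < ∑ i, (p i - q i) := by
    obtain ⟨i0, hi0⟩ := hne
    apply Finset.sum_lt_sum
    · intro i _
      have h1 : 0 < p i / q i := div_pos (hp i) (hq i)
      have hl := Real.log_le_sub_one_of_pos h1
      have hld : Real.log (p i / q i) = Real.log (p i) - Real.log (q i) :=
        Real.log_div (hp i).ne' (hq i).ne'
      calc q i * Real.log (p i) - q i * Real.log (q i)
          = q i * Real.log (p i / q i) := by rw [hld, mul_sub]
        _ ≤ q i * (p i / q i - 1) := mul_le_mul_of_nonneg_left hl (hq i).le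
        _ = p i - q i := by rw [mul_sub, mul_one, mul_div_cancel₀ _ (hq i).ne']
    · refine ⟨i0, Finset.mem_univ _, ?_⟩
      have h1 : 0 < p i0 / q i0 := div_pos (hp i0) (hq i0)
      have hne1 : p i0 / q i0 ≠ 1 := by
        intro h
        exact hi0 ((div_eq_one_iff_eq (hq i0).ne').1 h)
      have hl := Real.log_lt_sub_one_of_pos h1 hne1
      have hld : Real.log (p i0 / q i0) = Real.log (p i0) - Real.log (q i0) :=
        Real.log_div (hp i0).ne' (hq i0).ne'
      calc q i0 * Real.log (p i0) - q i0 * Real.log (q i0)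
          = q i0 * Real.log (p i0 / q i0) := by rw [hld, mul_sub]
        _ < q i0 * (p i0 / q i0 - 1) := (mul_lt_mul_iff_right₀ (hq i0)).2 hl
        _ = p i0 - q i0 := by rw [mul_sub, mul_one, mul_div_cancel₀ _ (hq i0).ne']
  have hsum : ∑ i, (p i - q i) = (0:ℝ) := by
    rw [Finset.sum_sub_distrib, hsp, hsq]; ring
  rw [Finset.sum_sub_distrib] at key
  linarith

/-- For an exact power-law spectrum σ_i = i^{-α}, RankMe is strictly decreasing in α:
for α' > α ≥ 0, RankMe(α') < RankMe(α). -/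
theorem rankme_strict_anti_in_powerlaw_exponent (d : ℕ) (hd : 2 ≤ d)
    (a a' : ℝ) (ha : 0 ≤ a) (haa : a < a')
    (σ : ℝ → Fin d → ℝ) (hσ : ∀ b i, σ b i = (((i : ℕ) + 1 : ℝ)) ^ (-b))
    (p : ℝ → Fin d → ℝ) (hp : ∀ b i, p b i = σ b i / ∑ j, σ b j)
    (RankMe : ℝ → ℝ)
    (hR : ∀ b, RankMe b = Real.exp (-∑ i, p b i * Real.log (p b i))) :
    RankMe a' < RankMe a := by
  set L : Fin d → ℝ := fun i => Real.log ((i : ℕ) + 1) with hL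
  have hbase : ∀ i : Fin d, (0:ℝ) < ((i : ℕ) + 1 : ℝ) := by
    intro i; positivity
  have hσexp : ∀ b (i : Fin d), σ b i = Real.exp (-(b * L i)) := by
    intro b i
    rw [hσ, Real.rpow_def_of_pos (hbase i), mul_comm, ← neg_mul, hL]
  have hσpos : ∀ b (i : Fin d), 0 < σ b i := by
    intro b i; rw [hσexp]; exact Real.exp_pos _
  have hZpos : ∀ b, 0 < ∑ j, σ b j := by
    intro b
    apply Finset.sum_pos (fun i _ => hσpos b i)
    exact Finset.univ_nonempty_iff.mpr ⟨⟨0, by omega⟩⟩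
  have hppos : ∀ b (i : Fin d), 0 < p b i := by
    intro b i; rw [hp]; exact div_pos (hσpos b i) (hZpos b)
  have hpsum : ∀ b, ∑ i, p b i = 1 := by
    intro b
    simp only [hp]
    rw [← Finset.sum_div, div_self (hZpos b).ne']
  have hlogp : ∀ b (i : Fin d),
      Real.log (p b i) = -(b * L i) - Real.log (∑ j, σ b j) := by
    intro b i
    rw [hp, Real.log_div (hσpos b i).ne' (hZpos b).ne', hσexp, Real.log_exp]
  set M : ℝ → ℝ := fun b => ∑ i, p b i * L i with hM
  have hcross : ∀ b c, ∑ i, p c i * Real.log (p b i)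
      = -(b * M c) - Real.log (∑ j, σ b j) := by
    intro b c
    have e0 : ∀ i : Fin d, p c i * Real.log (p b i)
        = -(b * (p c i * L i)) - p c i * Real.log (∑ j, σ b j) := by
      intro i; rw [hlogp]; ring
    rw [Finset.sum_congr rfl (fun i _ => e0 i), Finset.sum_sub_distrib]
    have e1 : ∑ x : Fin d, -(b * (p c x * L x)) = -(b * M c) := by
      rw [Finset.mul_sum, ← Finset.sum_neg_distrib]
    have e2 : ∑ x : Fin d, p c x * Real.log (∑ j, σ b j)
        = Real.log (∑ j, σ b j) := by
      rw [← Finset.sum_mul, hpsum, one_mul]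
    rw [e1, e2]
  -- p a and p a' differ somewhere
  have hne : ∃ i, p a i ≠ p a' i := by
    by_contra hcon
    push_neg at hcon
    have hL0 : L (⟨0, by omega⟩ : Fin d) = 0 := by rw [hL]; norm_num
    have hL1 : L (⟨1, by omega⟩ : Fin d) = Real.log 2 := by rw [hL]; norm_num
    have h0 := hcon ⟨0, by omega⟩
    have h1 := hcon ⟨1, by omega⟩
    rw [hp, hp, hσexp, hσexp, hL0] at h0
    rw [hp, hp, hσexp, hσexp, hL1] at h1
    simp only [mul_zero, neg_zero, Real.exp_zero] at h0
    have hZeq : ∑ j, σ a j = ∑ j, σ a' j := by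
      rw [div_eq_div_iff (hZpos a).ne' (hZpos a').ne'] at h0
      linarith
    rw [hZeq] at h1
    have hexp : Real.exp (-(a * Real.log 2)) = Real.exp (-(a' * Real.log 2)) := by
      rw [div_eq_div_iff (hZpos a').ne' (hZpos a').ne'] at h1
      exact mul_right_cancel₀ (hZpos a').ne' h1
    have heq := neg_injective (Real.exp_injective hexp)
    have hlog2 : Real.log 2 ≠ 0 := (Real.log_pos (by norm_num)).ne'
    have : a = a' := mul_right_cancel₀ hlog2 heq
    linarith
  have hne' : ∃ i, p a' i ≠ p a i := by
    obtain ⟨i, hi⟩ := hne; exact ⟨i, hi.symm⟩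
  have g1 := gibbs_strict (p a) (p a') (hppos a) (hppos a') (hpsum a) (hpsum a') hne
  have g2 := gibbs_strict (p a') (p a) (hppos a') (hppos a) (hpsum a') (hpsum a) hne'
  rw [hcross a a', hcross a' a'] at g1
  rw [hcross a' a, hcross a a] at g2
  rw [hR, hR]
  rw [show (∑ i, p a i * Real.log (p a i)) = -(a * M a) - Real.log (∑ j, σ a j) from hcross a a,
      show (∑ i, p a' i * Real.log (p a' i)) = -(a' * M a') - Real.log (∑ j, σ a' j) from hcross a' a']
  apply Real.exp_lt_exp.2
  have hMab : M a' < M a := by nlinarith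
  nlinarith [mul_le_mul_of_nonneg_left hMab.le ha]
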